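/- arXiv:2408.01917 — 2 statements merged into one kernel-verified Lean document; each statement's English description precedes it below -/
import Mathlib

section
/- Let f be C³ on an interval with f' > 0 and f'·f''' − (f'')² ≤ 0. Fix X₀ in the interval and define G(X) = f(X)·f''(X₀) − f'(X)·f'(X₀). Then G attains its minimum at X = X₀, i.e. G(X) ≥ G(X₀) for all X in the interval. -/
/-! The ratio `f'' / f'` has derivative `(f' f''' - f''²) / f'² ≤ 0`, so it is antitone on `I`.
Since `G' X = f' X · f' X₀ · (f'' X₀ / f' X₀ - f'' X / f' X)`, the derivative of `G` is `≤ 0`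
left of `X₀` and `≥ 0` right of it. -/

open Set

section SignOfDerivative

variable {D : Set ℝ} {g g' : ℝ → ℝ}

lemma Convex.monotoneOn_of_hasDerivWithinAt_nonneg (hD : Convex ℝ D)
    (hg : ∀ x ∈ D, HasDerivWithinAt g (g' x) D x) (hg' : ∀ x ∈ D, 0 ≤ g' x) :
    MonotoneOn g D :=
  _root_.monotoneOn_of_hasDerivWithinAt_nonneg hD (fun x hx ↦ (hg x hx).continuousWithinAt)
    (fun x hx ↦ (hg x (interior_subset hx)).mono interior_subset)
    (fun x hx ↦ hg' x (interior_subset hx))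

lemma Convex.antitoneOn_of_hasDerivWithinAt_nonpos (hD : Convex ℝ D)
    (hg : ∀ x ∈ D, HasDerivWithinAt g (g' x) D x) (hg' : ∀ x ∈ D, g' x ≤ 0) :
    AntitoneOn g D :=
  _root_.antitoneOn_of_hasDerivWithinAt_nonpos hD (fun x hx ↦ (hg x hx).continuousWithinAt)
    (fun x hx ↦ (hg x (interior_subset hx)).mono interior_subset)
    (fun x hx ↦ hg' x (interior_subset hx))

lemma Convex.isMinOn_of_hasDerivWithinAt_sign (hD : Convex ℝ D)
    (hg : ∀ x ∈ D, HasDerivWithinAt g (g' x) D x) {a : ℝ} (ha : a ∈ D)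
    (hleft : ∀ x ∈ D, x ≤ a → g' x ≤ 0) (hright : ∀ x ∈ D, a ≤ x → 0 ≤ g' x) :
    IsMinOn g D a := by
  refine isMinOn_iff.mpr fun x hx ↦ (le_total x a).elim (fun hxa ↦ ?_) (fun hax ↦ ?_)
  · have hanti : AntitoneOn g (D ∩ Iic a) :=
      (hD.inter (convex_Iic a)).antitoneOn_of_hasDerivWithinAt_nonpos
        (fun y hy ↦ (hg y hy.1).mono inter_subset_left) (fun y hy ↦ hleft y hy.1 hy.2)
    exact hanti ⟨hx, hxa⟩ ⟨ha, self_mem_Iic⟩ hxa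
  · have hmono : MonotoneOn g (D ∩ Ici a) :=
      (hD.inter (convex_Ici a)).monotoneOn_of_hasDerivWithinAt_nonneg
        (fun y hy ↦ (hg y hy.1).mono inter_subset_left) (fun y hy ↦ hright y hy.1 hy.2)
    exact hmono ⟨ha, self_mem_Ici⟩ ⟨hx, hax⟩ hax

lemma Convex.antitoneOn_div_of_hasDerivWithinAt (hD : Convex ℝ D) {u u' v v' : ℝ → ℝ}
    (hu : ∀ x ∈ D, HasDerivWithinAt u (u' x) D x) (hv : ∀ x ∈ D, HasDerivWithinAt v (v' x) D x)
    (hv₀ : ∀ x ∈ D, 0 < v x) (hwronskian : ∀ x ∈ D, u' x * v x - u x * v' x ≤ 0) :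
    AntitoneOn (fun x ↦ u x / v x) D :=
  hD.antitoneOn_of_hasDerivWithinAt_nonpos
    (fun x hx ↦ (hu x hx).div (hv x hx) (hv₀ x hx).ne')
    (fun x hx ↦ div_nonpos_of_nonpos_of_nonneg (hwronskian x hx) (sq_nonneg _))

end SignOfDerivative

theorem stmt3_general (I : Set ℝ) (hI : Convex ℝ I)
    (f f' f'' f''' : ℝ → ℝ)
    (hder1 : ∀ x ∈ I, HasDerivWithinAt f (f' x) I x)
    (hder2 : ∀ x ∈ I, HasDerivWithinAt f' (f'' x) I x)
    (hder3 : ∀ x ∈ I, HasDerivWithinAt f'' (f''' x) I x)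
    (hpos : ∀ x ∈ I, 0 < f' x)
    (hcin : ∀ x ∈ I, f' x * f''' x - (f'' x) ^ 2 ≤ 0)
    (X₀ : ℝ) (hX₀ : X₀ ∈ I) :
    ∀ X ∈ I,
      f X₀ * f'' X₀ - f' X₀ * f' X₀ ≤ f X * f'' X₀ - f' X * f' X₀ := by
  have hratio : AntitoneOn (fun x ↦ f'' x / f' x) I :=
    hI.antitoneOn_div_of_hasDerivWithinAt hder3 hder2 hpos
      (fun x hx ↦ by linarith [hcin x hx])
  have hG : ∀ x ∈ I, HasDerivWithinAt (fun X ↦ f X * f'' X₀ - f' X * f' X₀)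
      (f' x * f'' X₀ - f'' x * f' X₀) I x :=
    fun x hx ↦ ((hder1 x hx).mul_const _).sub ((hder2 x hx).mul_const _)
  refine isMinOn_iff.mp (hI.isMinOn_of_hasDerivWithinAt_sign hG hX₀ ?_ ?_)
  · intro x hx hxX₀
    have := (div_le_div_iff₀ (hpos X₀ hX₀) (hpos x hx)).mp (hratio hx hX₀ hxX₀)
    linarith
  · intro x hx hX₀x
    have := (div_le_div_iff₀ (hpos x hx) (hpos X₀ hX₀)).mp (hratio hX₀ hx hX₀x)
    linarith

/-- Let `f` be C³ on an interval with `f' > 0`, `f'' > 0` and `f'·f''' − (f'')² ≤ 0`.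
Fix `X₀` in the interval and let `G(X) = f(X)·f''(X₀) − f'(X)·f'(X₀)`. Then `G`
attains its minimum at `X₀`. -/
theorem stmt3 (I : Set ℝ) (hI : Convex ℝ I)
    (f f' f'' f''' : ℝ → ℝ)
    (hder1 : ∀ x ∈ I, HasDerivWithinAt f (f' x) I x)
    (hder2 : ∀ x ∈ I, HasDerivWithinAt f' (f'' x) I x)
    (hder3 : ∀ x ∈ I, HasDerivWithinAt f'' (f''' x) I x)
    (hcont : ContinuousOn f''' I)
    (hpos : ∀ x ∈ I, 0 < f' x)
    (hpos2 : ∀ x ∈ I, 0 < f'' x)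
    (hcin : ∀ x ∈ I, f' x * f''' x - (f'' x) ^ 2 ≤ 0)
    (X₀ : ℝ) (hX₀ : X₀ ∈ I) :
    ∀ X ∈ I,
      f X₀ * f'' X₀ - f' X₀ * f' X₀ ≤ f X * f'' X₀ - f' X * f' X₀ :=
  stmt3_general I hI f f' f'' f''' hder1 hder2 hder3 hpos hcin X₀ hX₀
end

section
/- Let K ⊆ ℝ² be a measurable set containing, for every a ∈ [1,2], a translate of the curve {(t, a f(t)) : t ∈ [c₀, 1]} for some fixed c₀ < 1, and suppose |K(δ)| ≤ A(δ) where K(δ) is the vertical δ-thickening. Then the maximal operator R_δ g(a) = sup_{x∈ℝ²} (2δ)^{−1} ∫₀¹∫_{−δ}^{δ} |g(x₁+t, x₂+a f(t)+s)| ds dt satisfies: for g = 1_{K(δ)}, R_δ g(a) ≥ 1 − c₀ for all a ∈ [1,2], and hence the operator norm R(p,q,δ) from L^p(ℝ²) to L^q([1,2]) is at least (1−c₀)·A(δ)^{−1/p}. In particular, if A(δ) ≲ (log δ^{−1})^{−2}, then R(p,q,δ) ≳ (log δ^{−1})^{2/p}. -/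
open Set MeasureTheory

/-- Vertical `δ`-thickening of a planar set. -/
def vthick (S : Set (ℝ × ℝ)) (δ : ℝ) : Set (ℝ × ℝ) :=
  {p : ℝ × ℝ | ∃ q ∈ S, p.1 = q.1 ∧ |p.2 - q.2| ≤ δ}

/-- The `δ`-thickened maximal operator along the curves `t ↦ a f(t)`. -/
noncomputable def Rop (f : ℝ → ℝ) (δ : ℝ) (g : ℝ × ℝ → ℝ) (a : ℝ) : ℝ :=
  ⨆ x : ℝ × ℝ, (2 * δ)⁻¹ *
    ∫ t in (0:ℝ)..1, ∫ s in (-δ)..δ, |g (x.1 + t, x.2 + a * f t + s)|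

/-!
At the translate `x` of the curve with aperture `a`, the whole vertical segment of length `2δ`
above each point with `t ∈ [c₀, 1]` lies in `K(δ)`, so the average defining `R_δ 1_{K(δ)}(a)` is
at least `1 - c₀`; dividing by `‖1_{K(δ)}‖_p ≤ |K(δ)|^{1/p} ≤ A^{1/p}` gives the norm bound.

The only subtlety is measurability, without which the Bochner integrals would be the junk value
`0`. The set `K(δ)` is the continuous image of the Borel set `K × [-δ, δ]`, hence analytic, and
analytic sets of finite measure are null measurable by Choquet's capacitability argument: if
`g : ℕ^ℕ → X` is continuous and `r < μ (range g)`, bounding the coordinates one at a time while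
keeping the measure of the image above `r` yields a compact box whose image has measure `≥ r`.
-/

open Filter Topology
open scoped ENNReal Interval

def boundedUpTo (τ : ℕ → ℕ) (k : ℕ) : Set (ℕ → ℕ) := {σ | ∀ i < k, σ i ≤ τ i}

lemma boundedUpTo_succ (τ : ℕ → ℕ) (k : ℕ) :
    boundedUpTo τ (k + 1) = boundedUpTo τ k ∩ {σ | σ k ≤ τ k} := by
  ext σ
  simp only [boundedUpTo, mem_ofPred_eq, mem_inter_iff, Nat.forall_lt_succ_right]

lemma exists_boundedUpTo_subset_of_isOpen {τ : ℕ → ℕ} {W : Set (ℕ → ℕ)} (hW : IsOpen W)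
    (hτ : univ.pi (fun i => Iic (τ i)) ⊆ W) : ∃ k, boundedUpTo τ k ⊆ W := by
  by_contra! h
  choose σ hσ hσW using fun k => not_subset.1 (h k)
  have hbox : IsCompact (univ.pi fun i => Iic (τ i)) :=
    isCompact_univ_pi fun i => (finite_Iic (τ i)).isCompact
  -- Clipped to the box, `σ k` is unchanged on its first `k` coordinates.
  obtain ⟨L, hL, φ, hφ, hlim⟩ :=
    hbox.tendsto_subseq (x := fun k i => min (σ k i) (τ i)) fun k i _ =>
      mem_Iic.2 (min_le_right _ _)
  have hσlim : Tendsto (σ ∘ φ) atTop (𝓝 L) := by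
    refine tendsto_pi_nhds.2 fun i => ((tendsto_pi_nhds.1 hlim) i).congr' ?_
    filter_upwards [eventually_gt_atTop i] with j hj
    exact min_eq_left (hσ (φ j) i (hj.trans_le hφ.le_apply))
  obtain ⟨j, hj⟩ := (hσlim.eventually (hW.mem_nhds (hτ hL))).exists
  exact hσW (φ j) hj

section Capacity

variable {X : Type*} [MeasurableSpace X] {μ : Measure X}
  {g : (ℕ → ℕ) → X} {r : ℝ≥0∞}

lemma exists_lt_measure_image_inter_setOf_le {A : Set (ℕ → ℕ)} (hr : r < μ (g '' A)) (k : ℕ) :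
    ∃ m, r < μ (g '' (A ∩ {σ | σ k ≤ m})) := by
  have hA : g '' A = ⋃ m, g '' (A ∩ {σ | σ k ≤ m}) := by
    ext y
    simp only [mem_image, mem_iUnion, mem_inter_iff]
    exact ⟨fun ⟨σ, hσ, e⟩ => ⟨σ k, σ, ⟨hσ, le_refl (σ k)⟩, e⟩, fun ⟨_, σ, ⟨hσ, _⟩, e⟩ => ⟨σ, hσ, e⟩⟩
  have hmono : Monotone fun m => g '' (A ∩ {σ | σ k ≤ m}) := fun m m' hm =>
    image_mono (inter_subset_inter_right _ fun σ hσ => le_trans hσ hm)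
  rwa [hA, hmono.measure_iUnion, lt_iSup_iff] at hr

lemma exists_forall_lt_measure_image_boundedUpTo (hr : r < μ (range g)) :
    ∃ τ : ℕ → ℕ, ∀ k, r < μ (g '' boundedUpTo τ k) := by
  choose m hm using fun (A : {A : Set (ℕ → ℕ) // r < μ (g '' A)}) k =>
    exists_lt_measure_image_inter_setOf_le A.2 k
  let A : ℕ → {A : Set (ℕ → ℕ) // r < μ (g '' A)} := fun k =>
    Nat.rec ⟨univ, by rwa [image_univ]⟩ (fun k A => ⟨A.1 ∩ {σ | σ k ≤ m A k}, hm A k⟩) k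
  refine ⟨fun k => m (A k) k, fun k => ?_⟩
  suffices h : ∀ k, (A k).1 = boundedUpTo (fun k => m (A k) k) k by rw [← h]; exact (A k).2
  intro k
  induction k with
  | zero => ext σ; simp [A, boundedUpTo]
  | succ k ih => rw [boundedUpTo_succ, ← ih]

variable [TopologicalSpace X]

lemma exists_isCompact_subset_range_le_measure [μ.OuterRegular] (hg : Continuous g)
    (hr : r < μ (range g)) : ∃ C ⊆ range g, IsCompact C ∧ r ≤ μ C := by
  obtain ⟨τ, hτ⟩ := exists_forall_lt_measure_image_boundedUpTo hr
  refine ⟨g '' univ.pi fun i => Iic (τ i), image_subset_range _ _,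
    (isCompact_univ_pi fun i => (finite_Iic (τ i)).isCompact).image hg, ?_⟩
  by_contra! hC
  obtain ⟨U, hCU, hU, hUr⟩ := exists_isOpen_lt_of_lt _ r hC
  obtain ⟨k, hk⟩ := exists_boundedUpTo_subset_of_isOpen (hU.preimage hg) (image_subset_iff.1 hCU)
  exact (hτ k).not_ge ((measure_mono (image_subset_iff.2 hk)).trans hUr.le)

theorem MeasureTheory.AnalyticSet.exists_isCompact_subset_le_measure [μ.OuterRegular]
    {s : Set X} (hs : AnalyticSet s) (hr : r < μ s) : ∃ C ⊆ s, IsCompact C ∧ r ≤ μ C := by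
  rw [AnalyticSet] at hs
  rcases hs with rfl | ⟨g, hg, rfl⟩
  · simp at hr
  · exact exists_isCompact_subset_range_le_measure hg hr

end Capacity

lemma MeasureTheory.NullMeasurableSet.of_forall_lt_exists_subset {α : Type*} [MeasurableSpace α]
    {μ : Measure α} {s : Set α} (hs : μ s ≠ ∞)
    (h : ∀ r < μ s, ∃ t ⊆ s, MeasurableSet t ∧ r ≤ μ t) : NullMeasurableSet s μ := by
  obtain hs0 | hs0 := eq_zero_or_pos (μ s)
  · exact NullMeasurableSet.of_null hs0
  obtain ⟨u, -, hu, hlim⟩ := exists_seq_strictMono_tendsto' hs0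
  choose t hts htm hut using fun n => h (u n) (hu n).2
  have hE : MeasurableSet (⋃ n, t n) := MeasurableSet.iUnion htm
  have hEs : ⋃ n, t n ⊆ s := iUnion_subset hts
  have hnull : μ (s \ ⋃ n, t n) = 0 := by
    rw [measure_sdiff hEs hE.nullMeasurableSet (ne_top_of_le_ne_top hs (measure_mono hEs)),
      tsub_eq_zero_iff_le]
    exact le_of_tendsto' hlim fun n => (hut n).trans (measure_mono (subset_iUnion t n))
  rw [← union_sdiff_cancel hEs]
  exact hE.nullMeasurableSet.union (NullMeasurableSet.of_null hnull)

theorem MeasureTheory.AnalyticSet.nullMeasurableSet {X : Type*} [TopologicalSpace X] [T2Space X]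
    [MeasurableSpace X] [OpensMeasurableSpace X] {μ : Measure X} [μ.OuterRegular] {s : Set X}
    (hs : AnalyticSet s) (hμ : μ s ≠ ∞) : NullMeasurableSet s μ :=
  .of_forall_lt_exists_subset hμ fun _ hr =>
    let ⟨C, hCs, hC, hrC⟩ := hs.exists_isCompact_subset_le_measure hr
    ⟨C, hCs, hC.measurableSet, hrC⟩

lemma intervalIntegrable_intervalIntegral_comp_shear {φ : ℝ × ℝ → ℝ}
    (hφ : AEStronglyMeasurable φ) {C : ℝ} (hφC : ∀ z, ‖φ z‖ ≤ C) {h : ℝ → ℝ} (hh : Measurable h)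
    (x₁ a b : ℝ) {c d : ℝ} (hcd : c ≤ d) :
    IntervalIntegrable (fun t => ∫ s in c..d, φ (x₁ + t, h t + s)) volume a b := by
  have hshear : MeasurePreserving (fun p : ℝ × ℝ => (x₁ + p.1, h p.1 + p.2)) := by
    rw [Measure.volume_eq_prod]
    exact (measurePreserving_add_left volume x₁).skew_product (by fun_prop)
      (.of_forall fun t => map_add_left_eq_self volume (h t))
  have : IsFiniteMeasure (volume.restrict (Ι a b)) := by rw [uIoc]; infer_instance
  have hint : Integrable (fun p : ℝ × ℝ => φ (x₁ + p.1, h p.1 + p.2))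
      ((volume.restrict (Ι a b)).prod (volume.restrict (Ioc c d))) := by
    refine .of_bound ?_ C (.of_forall fun p => hφC _)
    rw [Measure.prod_restrict, ← Measure.volume_eq_prod]
    exact (hφ.comp_measurePreserving hshear).restrict
  simp_rw [intervalIntegral.integral_of_le hcd]
  exact (intervalIntegrable_iff).2 hint.integral_prod_left

lemma vthick_eq_image (K : Set (ℝ × ℝ)) (δ : ℝ) :
    vthick K δ = (fun p : (ℝ × ℝ) × ℝ => (p.1.1, p.1.2 + p.2)) '' (K ×ˢ Icc (-δ) δ) := by
  ext ⟨y₁, y₂⟩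
  constructor
  · rintro ⟨q, hq, rfl, hy⟩
    exact ⟨(q, y₂ - q.2), ⟨hq, abs_le.1 hy⟩, by simp⟩
  · rintro ⟨⟨q, ε⟩, ⟨hq, hε⟩, he⟩
    obtain ⟨rfl, rfl⟩ := Prod.ext_iff.1 he
    exact ⟨q, hq, rfl, by simpa [abs_le] using hε⟩

lemma MeasurableSet.analyticSet_vthick {K : Set (ℝ × ℝ)} (hK : MeasurableSet K) (δ : ℝ) :
    AnalyticSet (vthick K δ) := by
  rw [vthick_eq_image]
  exact (hK.prod measurableSet_Icc).analyticSet.image_of_continuous (by fun_prop)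

lemma mem_vthick_of_mem {K : Set (ℝ × ℝ)} {q : ℝ × ℝ} (hq : q ∈ K) {δ ε : ℝ} (hε : |ε| ≤ δ) :
    (q.1, q.2 + ε) ∈ vthick K δ :=
  ⟨q, hq, rfl, by simpa using hε⟩

lemma le_Rop_of_le {f : ℝ → ℝ} {δ : ℝ} (hδ : 0 ≤ δ) {g : ℝ × ℝ → ℝ} (hg : ∀ z, |g z| ≤ 1)
    {a c : ℝ} (x : ℝ × ℝ)
    (hc : c ≤ (2 * δ)⁻¹ * ∫ t in (0:ℝ)..1, ∫ s in (-δ)..δ, |g (x.1 + t, x.2 + a * f t + s)|) :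
    c ≤ Rop f δ g a := by
  refine le_ciSup_of_le ⟨1, ?_⟩ x hc
  rintro _ ⟨y, rfl⟩
  refine inv_mul_le_one_of_le₀ ?_ (by positivity)
  have hinner : ∀ t, ‖∫ s in (-δ)..δ, |g (y.1 + t, y.2 + a * f t + s)|‖ ≤ 2 * δ := fun t => by
    have := intervalIntegral.norm_integral_le_of_norm_le_const (a := -δ) (b := δ) (C := 1)
      (f := fun s => |g (y.1 + t, y.2 + a * f t + s)|) fun s _ => by simpa using hg _
    rwa [sub_neg_eq_add, abs_of_nonneg (by linarith), one_mul, ← two_mul] at this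
  simpa using (intervalIntegral.norm_integral_le_of_norm_le_const (a := 0) (b := 1)
    fun t _ => hinner t).trans' (le_abs_self _)

lemma intervalIntegrable_integral_abs_indicator {V : Set (ℝ × ℝ)} (hV : NullMeasurableSet V)
    {f : ℝ → ℝ} (hf : ContinuousOn f (Icc 0 1)) {δ : ℝ} (hδ : 0 ≤ δ) (a : ℝ) (x : ℝ × ℝ) :
    IntervalIntegrable (fun t => ∫ s in (-δ)..δ,
      |V.indicator (fun _ => (1:ℝ)) (x.1 + t, x.2 + a * f t + s)|) volume 0 1 := by
  -- The shear needs `f` measurable on all of `ℝ`: extend it continuously off `[0, 1]`.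
  set f' : ℝ → ℝ := fun t => f (projIcc 0 1 zero_le_one t)
  have hf' : Continuous f' := hf.comp_continuous (continuous_subtype_val.comp continuous_projIcc)
    fun t => (projIcc 0 1 zero_le_one t).2
  have hφ : AEStronglyMeasurable fun z => |V.indicator (fun _ => (1:ℝ)) z| := by
    simpa only [Real.norm_eq_abs] using
      (aestronglyMeasurable_const (b := (1:ℝ)).indicator₀ hV).norm
  refine (intervalIntegrable_intervalIntegral_comp_shear hφ (C := 1) (fun z => ?_)
    (h := fun t => x.2 + a * f' t) (by fun_prop) x.1 0 1 (c := -δ) (d := δ)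
    (by linarith)).congr fun t ht => ?_
  · by_cases hz : z ∈ V <;> simp [hz]
  · rw [uIoc_of_le zero_le_one] at ht
    simp only [f', projIcc_of_mem zero_le_one (Ioc_subset_Icc_self ht)]

lemma one_sub_le_Rop_indicator {V : Set (ℝ × ℝ)} (hV : NullMeasurableSet V) {f : ℝ → ℝ}
    (hf : ContinuousOn f (Icc 0 1)) {c₀ δ : ℝ} (hc₀ : 0 ≤ c₀) (hc₀1 : c₀ ≤ 1) (hδ : 0 < δ)
    (a : ℝ) (x : ℝ × ℝ)
    (hx : ∀ t ∈ Icc c₀ 1, ∀ s ∈ Icc (-δ) δ, (x.1 + t, x.2 + a * f t + s) ∈ V) :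
    1 - c₀ ≤ Rop f δ (V.indicator fun _ => 1) a := by
  set F : ℝ → ℝ := fun t =>
    ∫ s in (-δ)..δ, |V.indicator (fun _ => (1:ℝ)) (x.1 + t, x.2 + a * f t + s)|
  have hF_nonneg : ∀ t, 0 ≤ F t := fun t =>
    intervalIntegral.integral_nonneg (by linarith) fun _ _ => abs_nonneg _
  have hF_eq : EqOn F (fun _ => 2 * δ) (uIcc c₀ 1) := by
    intro t ht
    rw [uIcc_of_le hc₀1] at ht
    have : EqOn (fun s => |V.indicator (fun _ => (1:ℝ)) (x.1 + t, x.2 + a * f t + s)|) 1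
        (uIcc (-δ) δ) := fun s hs => by
      rw [uIcc_of_le (by linarith)] at hs
      simp [indicator_of_mem (hx t ht s hs)]
    simp only [F, intervalIntegral.integral_congr this, Pi.one_apply,
      intervalIntegral.integral_const, sub_neg_eq_add, smul_eq_mul, mul_one]
    ring
  have hF_int : IntervalIntegrable F volume 0 1 :=
    intervalIntegrable_integral_abs_indicator hV hf hδ.le a x
  have hmain : (1 - c₀) * (2 * δ) ≤ ∫ t in (0:ℝ)..1, F t :=
    calc (1 - c₀) * (2 * δ) = ∫ t in c₀..1, F t := by
          rw [intervalIntegral.integral_congr hF_eq, intervalIntegral.integral_const, smul_eq_mul]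
      _ ≤ (∫ t in (0:ℝ)..c₀, F t) + ∫ t in c₀..1, F t :=
          le_add_of_nonneg_left (intervalIntegral.integral_nonneg hc₀ fun t _ => hF_nonneg t)
      _ = ∫ t in (0:ℝ)..1, F t := intervalIntegral.integral_add_adjacent_intervals
          (hF_int.mono_set (uIcc_subset_uIcc_left (by simp [hc₀, hc₀1])))
          (hF_int.mono_set (uIcc_subset_uIcc_right (by simp [hc₀, hc₀1])))
  refine le_Rop_of_le hδ.le (fun z => by by_cases hz : z ∈ V <;> simp [hz]) x ?_
  rw [le_inv_mul_iff₀ (by positivity)]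
  linarith

lemma ofReal_le_eLpNorm_of_ae_le {β : Type*} [MeasurableSpace β] {ν : Measure β}
    [IsProbabilityMeasure ν] {F : β → ℝ} {c : ℝ} (hc : 0 ≤ c) (hF : ∀ᵐ b ∂ν, c ≤ F b)
    {q : ℝ≥0∞} (hq : q ≠ 0) : ENNReal.ofReal c ≤ eLpNorm F q ν :=
  calc ENNReal.ofReal c = eLpNorm (fun _ => c) q ν := by
        rw [eLpNorm_const _ hq (IsProbabilityMeasure.ne_zero ν), measure_univ, ENNReal.one_rpow,
          mul_one, Real.enorm_eq_ofReal hc]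
    _ ≤ eLpNorm F q ν := eLpNorm_mono_ae <| hF.mono fun b hb => by
        rw [Real.norm_eq_abs, Real.norm_eq_abs, abs_of_nonneg hc]
        exact hb.trans (le_abs_self _)

lemma eLpNorm_indicator_one_le_ofReal_rpow {α : Type*} [MeasurableSpace α] {μ : Measure α}
    {V : Set α} {A : ℝ} (hA : 0 < A) (hV : μ V ≤ ENNReal.ofReal A) {p : ℝ} (hp : 0 < p) :
    eLpNorm (V.indicator fun _ => (1:ℝ)) (ENNReal.ofReal p) μ ≤ ENNReal.ofReal (A ^ (1 / p)) :=
  calc eLpNorm (V.indicator fun _ => (1:ℝ)) (ENNReal.ofReal p) μ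
      ≤ ‖(1:ℝ)‖ₑ * μ V ^ (1 / (ENNReal.ofReal p).toReal) := eLpNorm_indicator_const_le _ _
    _ ≤ ENNReal.ofReal A ^ (1 / p) := by
        rw [enorm_one, one_mul, ENNReal.toReal_ofReal hp.le]
        gcongr
    _ = ENNReal.ofReal (A ^ (1 / p)) := ENNReal.ofReal_rpow_of_pos hA

/-- If `K ⊆ ℝ²` contains, for every `a ∈ [1,2]`, a translate of the curve
`{(t, a f(t)) : t ∈ [c₀,1]}`, and `|K(δ)| ≤ A`, then for `g = 1_{K(δ)}` one has
`R_δ g(a) ≥ 1 − c₀` for all `a ∈ [1,2]`, and hence the `L^p → L^q([1,2])` operator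
norm is at least `(1 − c₀)·A^{−1/p}`. -/
theorem stmt17 (f : ℝ → ℝ) (hf : ContinuousOn f (Icc (0:ℝ) 1))
    (c₀ : ℝ) (hc₀ : 0 ≤ c₀) (hc₀' : c₀ < 1)
    (K : Set (ℝ × ℝ)) (hKm : MeasurableSet K)
    (δ : ℝ) (hδ : 0 < δ) (A : ℝ) (hA : 0 < A)
    (hcurve : ∀ a ∈ Icc (1:ℝ) 2, ∃ x : ℝ × ℝ,
      ∀ t ∈ Icc c₀ 1, (x.1 + t, x.2 + a * f t) ∈ K)
    (hvol : volume (vthick K δ) ≤ ENNReal.ofReal A) :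
    (∀ a ∈ Icc (1:ℝ) 2,
      1 - c₀ ≤ Rop f δ ((vthick K δ).indicator fun _ => (1:ℝ)) a) ∧
    (∀ p q : ℝ, 1 ≤ p → 1 ≤ q →
      ENNReal.ofReal ((1 - c₀) * A ^ (-(1 / p))) ≤
        eLpNorm (Rop f δ ((vthick K δ).indicator fun _ => (1:ℝ)))
            (ENNReal.ofReal q) (volume.restrict (Icc (1:ℝ) 2)) /
          eLpNorm ((vthick K δ).indicator fun _ => (1:ℝ))
            (ENNReal.ofReal p) volume) := by
  have hV : NullMeasurableSet (vthick K δ) :=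
    (hKm.analyticSet_vthick δ).nullMeasurableSet (ne_top_of_le_ne_top ENNReal.ofReal_ne_top hvol)
  have hlower : ∀ a ∈ Icc (1:ℝ) 2,
      1 - c₀ ≤ Rop f δ ((vthick K δ).indicator fun _ => (1:ℝ)) a := fun a ha => by
    obtain ⟨x, hx⟩ := hcurve a ha
    exact one_sub_le_Rop_indicator hV hf hc₀ hc₀'.le hδ a x fun t ht s hs =>
      mem_vthick_of_mem (hx t ht) (abs_le.2 hs)
  refine ⟨hlower, fun p q hp hq => ?_⟩
  have : IsProbabilityMeasure (volume.restrict (Icc (1:ℝ) 2)) := ⟨by norm_num [Real.volume_Icc]⟩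
  calc ENNReal.ofReal ((1 - c₀) * A ^ (-(1 / p)))
      = ENNReal.ofReal (1 - c₀) / ENNReal.ofReal (A ^ (1 / p)) := by
        rw [Real.rpow_neg hA.le, ← div_eq_mul_inv, ENNReal.ofReal_div_of_pos (by positivity)]
    _ ≤ _ := ENNReal.div_le_div
        (ofReal_le_eLpNorm_of_ae_le (by linarith) ((ae_restrict_iff' measurableSet_Icc).2
          (.of_forall hlower)) (by simp; linarith))
        (eLpNorm_indicator_one_le_ofReal_rpow hA hvol (by linarith))
end
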